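/- arXiv:1310.0379 — 3 statements merged into one kernel-verified Lean document; each statement's English description precedes it below -/
import Mathlib

section
/- For fixed c > 0, n ≥ 0, and λ > 0 with n > λ or n < λ appropriately handled, the function g(b) = n·b − c·e^b − λ·|b| (on ℝ) attains its maximum at b* = ln(1 + S_λ(n − c)/c), where S_λ(x) = sign(x)·max(|x| − λ, 0) is the soft-thresholding operator, provided 1 + S_λ(n − c)/c > 0. -/
/-!
With `t = S_λ(n - c)` and `b* = log (1 + t / c)` we have `c e^{b*} = c + t`, so
`g b = (c e^{b*} b - c e^b) + (s b - λ |b|)` with `s = n - c - t`.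
The first summand is maximal at `b*` because `exp` lies above its tangent line there.
The second is maximal at `b*` because soft thresholding is the proximal map of `λ |·|`:
`|s| ≤ λ`, and `s b* = λ |b*|` since `b*` has the sign of `t`.
-/

open Real

/-- The soft-thresholding operator. -/
noncomputable def softThresh (lam x : ℝ) : ℝ := Real.sign x * max (|x| - lam) 0

theorem softThresh_of_abs_le {lam x : ℝ} (h : |x| ≤ lam) : softThresh lam x = 0 := by
  simp [softThresh, max_eq_right (sub_nonpos.mpr h)]

theorem softThresh_of_lt {lam x : ℝ} (hlam : 0 ≤ lam) (h : lam < x) :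
    softThresh lam x = x - lam := by
  rw [softThresh, Real.sign_of_pos (by linarith), abs_of_pos (by linarith),
    max_eq_left (by linarith), one_mul]

theorem softThresh_of_lt_neg {lam x : ℝ} (hlam : 0 ≤ lam) (h : x < -lam) :
    softThresh lam x = x + lam := by
  rw [softThresh, Real.sign_of_neg (by linarith), abs_of_neg (by linarith),
    max_eq_left (by linarith)]
  ring

theorem abs_sub_softThresh_le {lam : ℝ} (hlam : 0 ≤ lam) (x : ℝ) :
    |x - softThresh lam x| ≤ lam := by
  rcases le_or_gt |x| lam with h | h
  · rwa [softThresh_of_abs_le h, sub_zero]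
  rcases lt_abs.mp h with h | h
  · rw [softThresh_of_lt hlam h, sub_sub_cancel, abs_of_nonneg hlam]
  · rw [softThresh_of_lt_neg hlam (by linarith), sub_add_cancel_left, abs_neg,
      abs_of_nonneg hlam]

theorem Real.pos_of_sign_eq_one {r : ℝ} (h : Real.sign r = 1) : 0 < r := by
  rcases lt_trichotomy r 0 with hr | rfl | hr
  · rw [Real.sign_of_neg hr] at h; norm_num at h
  · rw [Real.sign_zero] at h; norm_num at h
  · exact hr

theorem Real.neg_of_sign_eq_neg_one {r : ℝ} (h : Real.sign r = -1) : r < 0 := by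
  rcases lt_trichotomy r 0 with hr | rfl | hr
  · exact hr
  · rw [Real.sign_zero] at h; norm_num at h
  · rw [Real.sign_of_pos hr] at h; norm_num at h

theorem sub_softThresh_mul_eq_of_sign_eq {lam x y : ℝ} (hlam : 0 ≤ lam)
    (hy : Real.sign y = Real.sign (softThresh lam x)) :
    (x - softThresh lam x) * y = lam * |y| := by
  rcases le_or_gt |x| lam with h | h
  · rw [softThresh_of_abs_le h, Real.sign_zero, Real.sign_eq_zero_iff] at hy
    simp [hy]
  rcases lt_abs.mp h with h | h
  · rw [softThresh_of_lt hlam h] at hy ⊢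
    rw [Real.sign_of_pos (show 0 < x - lam by linarith)] at hy
    rw [sub_sub_cancel, abs_of_pos (Real.pos_of_sign_eq_one hy)]
  · rw [softThresh_of_lt_neg hlam (by linarith)] at hy ⊢
    rw [Real.sign_of_neg (show x + lam < 0 by linarith)] at hy
    rw [sub_add_cancel_left, abs_of_neg (Real.neg_of_sign_eq_neg_one hy)]
    ring

theorem sign_log_one_add_div {c t : ℝ} (hc : 0 < c) (h : 0 < 1 + t / c) :
    Real.sign (log (1 + t / c)) = Real.sign t := by
  rcases lt_trichotomy t 0 with ht | rfl | ht
  · rw [Real.sign_of_neg ht,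
      Real.sign_of_neg (log_neg h (by linarith [div_neg_of_neg_of_pos ht hc]))]
  · simp
  · rw [Real.sign_of_pos ht, Real.sign_of_pos (log_pos (by linarith [div_pos ht hc]))]

theorem isMaxOn_mul_sub_mul_abs {lam s B : ℝ} (hs : |s| ≤ lam) (hB : s * B = lam * |B|) :
    IsMaxOn (fun b => s * b - lam * |b|) Set.univ B := fun b _ => by
  have hsb : s * b ≤ lam * |b| :=
    (le_abs_self _).trans ((abs_mul s b).trans_le (mul_le_mul_of_nonneg_right hs (abs_nonneg b)))
  simp only [Set.mem_ofPred_eq]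
  linarith

theorem isMaxOn_mul_exp_mul_sub_mul_exp {c : ℝ} (hc : 0 ≤ c) (B : ℝ) :
    IsMaxOn (fun b => c * exp B * b - c * exp b) Set.univ B := fun b _ => by
  have tangent : exp B * (1 + (b - B)) ≤ exp b := by
    have := mul_le_mul_of_nonneg_left (add_one_le_exp (b - B)) (exp_pos B).le
    rwa [← exp_add, add_sub_cancel, add_comm] at this
  simp only [Set.mem_ofPred_eq]
  nlinarith [mul_le_mul_of_nonneg_left tangent hc]

theorem soft_thresh_maximizer_general (c n lam : ℝ) (hc : 0 < c) (hlam : 0 < lam)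
    (hpos : 0 < 1 + softThresh lam (n - c) / c) :
    IsMaxOn (fun b : ℝ => n * b - c * Real.exp b - lam * |b|) Set.univ
      (Real.log (1 + softThresh lam (n - c) / c)) := by
  set t := softThresh lam (n - c)
  set B := log (1 + t / c)
  have hexp : c * exp B = c + t := by
    rw [exp_log hpos]
    field_simp
  have hsub : (n - c - t) * B = lam * |B| :=
    sub_softThresh_mul_eq_of_sign_eq hlam.le (sign_log_one_add_div hc hpos)
  have hsplit : (fun b => n * b - c * exp b - lam * |b|) =
      fun b => (c * exp B * b - c * exp b) + ((n - c - t) * b - lam * |b|) := by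
    funext b
    rw [hexp]
    ring
  rw [hsplit]
  exact (isMaxOn_mul_exp_mul_sub_mul_exp hc.le B).add
    (isMaxOn_mul_sub_mul_abs (abs_sub_softThresh_le hlam.le (n - c)) hsub)

theorem soft_thresh_maximizer (c n lam : ℝ) (hc : 0 < c) (hn : 0 ≤ n) (hlam : 0 < lam)
    (hpos : 0 < 1 + softThresh lam (n - c) / c) :
    IsMaxOn (fun b : ℝ => n * b - c * Real.exp b - lam * |b|) Set.univ
      (Real.log (1 + softThresh lam (n - c) / c)) :=
  soft_thresh_maximizer_general c n lam hc hlam hpos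
end

section
/- Suppose n_1, …, n_J are independent with n_j ~ Poisson(N μ_j), where μ_j = θ for 1 ≤ j ≤ k and μ_j = θ e^{b_j} > θ for k < j ≤ J (all fixed, θ > 0). Let θ̂_k = (Σ_{j≤k order statistics}) /(kN) using the k smallest counts, and λ = √(max_j n_j). Then P(n_{(k+1)} > N θ̂_k + λ) → 1 as N → ∞, where n_{(1)} ≤ … ≤ n_{(J)} are the order statistics. -/
open Real ProbabilityTheory Filter Finset

/-- The counts sorted in increasing order: `sortedCounts nv` is the list of order
statistics `n_(1) ≤ … ≤ n_(J)` (0-indexed). -/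
def sortedCounts {J : ℕ} (nv : Fin J → ℕ) : List ℕ :=
  (List.ofFn nv).insertionSort (· ≤ ·)

/-!
A Poisson count has variance equal to its mean, so by Chebyshev and a union bound all counts
`n_j` lie within `εN` of their means `N μ_j` with probability `1 - O(1/N)`. Choose `3ε` below
the gap between `θ` and the other means. On that event the `k` counts of mean `Nθ` are exactly
the `k` smallest ones, so their average is at most `Nθ + εN`; moreover `λ² ≤ max_j n_j = O(N)`
gives `λ < εN` for large `N`, while `n_(k+1) > Nθ + 2εN`.
-/

open MeasureTheory Topology
open scoped NNReal Nat

theorem List.insertionSort_append_of_forall_le {α : Type*} [LinearOrder α] {l₁ l₂ : List α}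
    (h : ∀ a ∈ l₁, ∀ b ∈ l₂, a ≤ b) :
    (l₁ ++ l₂).insertionSort (· ≤ ·) = l₁.insertionSort (· ≤ ·) ++ l₂.insertionSort (· ≤ ·) := by
  refine List.Perm.eq_of_sortedLE List.sortedLE_insertionSort ?_
    ((List.perm_insertionSort _ _).trans ?_)
  · refine List.Pairwise.sortedLE (List.pairwise_append.2 ⟨List.pairwise_insertionSort _ _,
      List.pairwise_insertionSort _ _, fun a ha b hb ↦ h a ?_ b ?_⟩)
    · exact (List.perm_insertionSort _ _).subset ha
    · exact (List.perm_insertionSort _ _).subset hb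
  · exact ((List.perm_insertionSort _ _).append (List.perm_insertionSort _ _)).symm

theorem List.exists_lt_of_mem_take_ofFn {α : Type*} {n k : ℕ} {f : Fin n → α} {x : α}
    (hx : x ∈ (List.ofFn f).take k) : ∃ j : Fin n, (j : ℕ) < k ∧ f j = x := by
  obtain ⟨i, hi, rfl⟩ := List.mem_take_iff_getElem.1 hx
  simp only [List.length_ofFn] at hi
  exact ⟨⟨i, by omega⟩, by simp; omega, by simp⟩

theorem List.exists_le_of_mem_drop_ofFn {α : Type*} {n k : ℕ} {f : Fin n → α} {x : α}
    (hx : x ∈ (List.ofFn f).drop k) : ∃ j : Fin n, k ≤ (j : ℕ) ∧ f j = x := by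
  obtain ⟨i, hi, rfl⟩ := List.mem_drop_iff_getElem.1 hx
  simp only [List.length_ofFn] at hi
  exact ⟨⟨k + i, by omega⟩, by simp, by simp⟩

lemma sortedCounts_eq_append {J k : ℕ} {nv : Fin J → ℕ}
    (h : ∀ i j : Fin J, (i : ℕ) < k → k ≤ (j : ℕ) → nv i ≤ nv j) :
    sortedCounts nv = ((List.ofFn nv).take k).insertionSort (· ≤ ·) ++
      ((List.ofFn nv).drop k).insertionSort (· ≤ ·) := by
  rw [sortedCounts, ← List.insertionSort_append_of_forall_le, List.take_append_drop]
  intro a ha b hb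
  obtain ⟨i, hi, rfl⟩ := List.exists_lt_of_mem_take_ofFn ha
  obtain ⟨j, hj, rfl⟩ := List.exists_le_of_mem_drop_ofFn hb
  exact h i j hi hj

lemma sum_take_sortedCounts_le_and_lt_getD {J k : ℕ} (hkJ : k < J) {nv : Fin J → ℕ} {c₁ c₂ : ℝ}
    (hc : c₁ ≤ c₂) (h₁ : ∀ j : Fin J, (j : ℕ) < k → (nv j : ℝ) ≤ c₁)
    (h₂ : ∀ j : Fin J, k ≤ (j : ℕ) → c₂ < nv j) :
    (((sortedCounts nv).take k).sum : ℝ) ≤ k * c₁ ∧ c₂ < (sortedCounts nv).getD k 0 := by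
  have hsplit := sortedCounts_eq_append (k := k) (nv := nv) fun i j hi hj ↦ by
    exact_mod_cast ((h₁ i hi).trans hc).trans (h₂ j hj).le
  have hlen : (((List.ofFn nv).take k).insertionSort (· ≤ ·)).length = k := by
    simp [List.length_insertionSort]; omega
  rw [hsplit, List.take_left' hlen, List.getD_append_right _ _ _ _ hlen.le, hlen, Nat.sub_self]
  constructor
  · rw [(List.perm_insertionSort _ _).sum_eq, Nat.cast_list_sum]
    have := List.sum_le_card_nsmul (((List.ofFn nv).take k).map ((↑) : ℕ → ℝ)) c₁ fun x hx ↦ by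
      obtain ⟨n, hn, rfl⟩ := List.mem_map.1 hx
      obtain ⟨j, hj, rfl⟩ := List.exists_lt_of_mem_take_ofFn hn
      exact h₁ j hj
    simpa [nsmul_eq_mul, show min k J = k by omega] using this
  · have hne : 0 < (((List.ofFn nv).drop k).insertionSort (· ≤ ·)).length := by
      simp [List.length_insertionSort]; omega
    rw [List.getD_eq_getElem _ _ hne]
    obtain ⟨j, hj, hx⟩ := List.exists_le_of_mem_drop_ofFn
      ((List.perm_insertionSort _ _).subset (List.getElem_mem hne))
    exact hx ▸ h₂ j hj

namespace ProbabilityTheory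

lemma hasSum_poisson_mul_descFactorial (r : ℝ≥0) (m : ℕ) :
    HasSum (fun n ↦ exp (-r) * r ^ n / n ! * n.descFactorial m) (r ^ m) := by
  -- the terms with `n < m` vanish, and shifting the others by `m` gives `r ^ m` times the weights
  have hshift : (fun n ↦ exp (-r) * r ^ (n + m) / (n + m)! * (n + m).descFactorial m) =
      fun n ↦ (r : ℝ) ^ m * (exp (-r) * r ^ n / n !) := by
    ext n
    have hfac : ((n + m)! : ℝ) = n ! * (n + m).descFactorial m := by
      exact_mod_cast (Nat.add_sub_cancel n m ▸
        Nat.factorial_mul_descFactorial (Nat.le_add_left m n)).symm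
    have : ((n + m).descFactorial m : ℝ) ≠ 0 := by
      exact_mod_cast (Nat.descFactorial_pos.2 (Nat.le_add_left m n)).ne'
    rw [hfac, pow_add]
    field_simp
  rw [← hasSum_nat_add_iff' m, hshift, Finset.sum_eq_zero fun i hi ↦ by
    simp [Nat.descFactorial_eq_zero_iff_lt.2 (Finset.mem_range.1 hi)], sub_zero]
  simpa using (hasSum_one_poissonMeasure r).mul_left ((r : ℝ) ^ m)

lemma integral_natCast_poissonMeasure (r : ℝ≥0) : ∫ n, (n : ℝ) ∂Po(r) = r := by
  rw [integral_poissonMeasure]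
  simpa using (hasSum_poisson_mul_descFactorial r 1).tsum_eq

lemma natCast_sq_eq_descFactorial (n : ℕ) :
    (n : ℝ) ^ 2 = n.descFactorial 2 + n.descFactorial 1 := by
  cases n <;> simp [Nat.descFactorial_succ]; ring

lemma hasSum_poisson_mul_sq (r : ℝ≥0) :
    HasSum (fun n ↦ exp (-r) * r ^ n / n ! * (n : ℝ) ^ 2) (r ^ 2 + r) := by
  simp_rw [natCast_sq_eq_descFactorial, mul_add]
  simpa using (hasSum_poisson_mul_descFactorial r 2).add (hasSum_poisson_mul_descFactorial r 1)

lemma memLp_two_natCast_poissonMeasure (r : ℝ≥0) : MemLp (fun n : ℕ ↦ (n : ℝ)) 2 Po(r) := by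
  rw [memLp_two_iff_integrable_sq .of_discrete, integrable_poissonMeasure_iff]
  simpa using (hasSum_poisson_mul_sq r).summable

lemma variance_natCast_poissonMeasure (r : ℝ≥0) : Var[fun n : ℕ ↦ (n : ℝ); Po(r)] = r := by
  rw [variance_eq_sub (memLp_two_natCast_poissonMeasure r), integral_natCast_poissonMeasure]
  simp only [Pi.pow_apply, integral_poissonMeasure, smul_eq_mul]
  rw [(hasSum_poisson_mul_sq r).tsum_eq]
  ring

lemma poissonMeasure_real_le_abs_sub (r : ℝ≥0) {t : ℝ} (ht : 0 < t) :
    Po(r).real {n | t ≤ |(n : ℝ) - r|} ≤ r / t ^ 2 := by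
  have := meas_ge_le_variance_div_sq (memLp_two_natCast_poissonMeasure r) ht
  rw [integral_natCast_poissonMeasure, variance_natCast_poissonMeasure] at this
  exact ENNReal.toReal_le_of_le_ofReal (by positivity) this

variable {ι : Type*} [Fintype ι]

set_option linter.deprecated false in
lemma measureReal_pi_poissonMeasure (r : ι → ℝ≥0) (p : (ι → ℕ) → Prop) [DecidablePred p] :
    (Measure.pi fun j ↦ Po(r j)).real {nv | p nv} =
      ∑' nv : ι → ℕ, if p nv then ∏ j, poissonPMFReal (r j) (nv j) else 0 := by
  rw [measureReal_def, ← Measure.tsum_indicator_apply_singleton _ _ (.of_discrete),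
    ENNReal.tsum_toReal_eq]
  swap
  · exact fun nv ↦ ((Set.indicator_le_self _ _ nv).trans_lt (measure_lt_top _ _)).ne
  congr! with nv
  simp only [Set.indicator_apply, Set.mem_ofPred_eq, Measure.pi_singleton, poissonMeasure_singleton]
  split_ifs
  · rw [ENNReal.toReal_prod]
    exact Finset.prod_congr rfl fun j _ ↦ ENNReal.toReal_ofReal (by positivity)
  · rfl

lemma measureReal_pi_poissonMeasure_exists_le_abs_sub (r : ι → ℝ≥0) {t : ℝ} (ht : 0 < t) :
    (Measure.pi fun j ↦ Po(r j)).real {nv | ∃ j, t ≤ |(nv j : ℝ) - r j|} ≤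
      (∑ j, (r j : ℝ)) / t ^ 2 := by
  have hunion : {nv : ι → ℕ | ∃ j, t ≤ |(nv j : ℝ) - r j|} =
      ⋃ j, Function.eval j ⁻¹' {n : ℕ | t ≤ |(n : ℝ) - r j|} := by
    ext; simp
  rw [hunion, Finset.sum_div]
  refine (measureReal_iUnion_fintype_le _).trans (Finset.sum_le_sum fun j _ ↦ ?_)
  exact ((measurePreserving_eval (fun j ↦ Po(r j)) j).measureReal_preimage
    MeasurableSet.of_discrete.nullMeasurableSet).trans_le (poissonMeasure_real_le_abs_sub _ ht)

end ProbabilityTheory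

lemma tendsto_measureReal_of_compl_le {Ω : Type*} [MeasurableSpace Ω] {P : ℕ → Measure Ω}
    [∀ N, IsProbabilityMeasure (P N)] {s : Set Ω} (hs : MeasurableSet s) {C : ℝ}
    (h : ∀ᶠ N : ℕ in atTop, (P N).real sᶜ ≤ C / N) :
    Tendsto (fun N ↦ (P N).real s) atTop (nhds 1) := by
  have hC : Tendsto (fun N : ℕ ↦ 1 - C / N) atTop (nhds (1 - 0)) :=
    tendsto_const_nhds.sub (tendsto_const_div_atTop_nhds_zero_nat C)
  rw [sub_zero] at hC
  refine tendsto_of_tendsto_of_tendsto_of_le_of_le' hC tendsto_const_nhds ?_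
    (.of_forall fun N ↦ measureReal_le_one)
  filter_upwards [h] with N hN
  rw [probReal_compl_eq_one_sub hs] at hN
  linarith

lemma exists_pos_forall_add_le {ι : Type*} [Finite ι] {p : ι → Prop} {a : ℝ} {b : ι → ℝ}
    (h : ∀ i, p i → a < b i) : ∃ ε > 0, ∀ i, p i → a + ε ≤ b i := by
  have hsmall : ∀ᶠ ε in 𝓝 (0 : ℝ), ∀ i, p i → a + ε ≤ b i := eventually_all.2 fun i ↦ by
    by_cases hi : p i
    · filter_upwards [eventually_lt_nhds (sub_pos.2 (h i hi))] with ε hε _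
      linarith
    · exact .of_forall fun _ hi' ↦ absurd hi' hi
  obtain ⟨ε, hε, hpos⟩ :=
    ((hsmall.filter_mono (nhdsWithin_le_nhds (s := Set.Ioi 0))).and self_mem_nhdsWithin).exists
  exact ⟨ε, hpos, hε⟩

/-- The event `n_(k+1) > N θ̂_k + λ`: `getD k` is the `(k+1)`-st order statistic. -/
def ExceedsThreshold {J : ℕ} (k : ℕ) (nv : Fin J → ℕ) : Prop :=
  (((sortedCounts nv).take k).sum : ℝ) / k + √((univ.sup nv : ℕ) : ℝ) < (sortedCounts nv).getD k 0

lemma exceedsThreshold_of_abs_sub_lt {J k : ℕ} (hk : 0 < k) (hkJ : k < J) {θ ε M N : ℝ}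
    {μ : Fin J → ℝ} (hε : 0 < ε) (hμ₁ : ∀ j : Fin J, (j : ℕ) < k → μ j = θ)
    (hμ₂ : ∀ j : Fin J, k ≤ (j : ℕ) → θ + 3 * ε ≤ μ j) (hM : ∀ j, μ j ≤ M)
    (hN : M + ε < ε ^ 2 * N) {nv : Fin J → ℕ} (hnv : ∀ j, |(nv j : ℝ) - N * μ j| < ε * N) :
    ExceedsThreshold k nv := by
  have hN₀ : 0 < N := pos_of_mul_pos_right ((abs_nonneg _).trans_lt (hnv ⟨k, hkJ⟩)) hε.le
  obtain ⟨hsum, hgetD⟩ := sum_take_sortedCounts_le_and_lt_getD hkJ (nv := nv)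
    (c₁ := N * θ + ε * N) (c₂ := N * θ + 2 * (ε * N)) (by nlinarith)
    (fun j hj ↦ by linarith [hμ₁ j hj ▸ (abs_lt.1 (hnv j)).2])
    (fun j hj ↦ by nlinarith [(abs_lt.1 (hnv j)).1, hμ₂ j hj])
  have hmean : (((sortedCounts nv).take k).sum : ℝ) / k ≤ N * θ + ε * N :=
    (div_le_iff₀' (by exact_mod_cast hk)).2 hsum
  have hmax : √((univ.sup nv : ℕ) : ℝ) < ε * N := by
    obtain ⟨j, -, hj⟩ := exists_mem_eq_sup univ ⟨⟨k, hkJ⟩, mem_univ _⟩ nv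
    rw [sqrt_lt' (by positivity), hj]
    nlinarith [(abs_lt.1 (hnv j)).2, hM j]
  unfold ExceedsThreshold
  linarith

lemma eventually_measureReal_not_exceedsThreshold_le {J k : ℕ} (hk : 0 < k) (hkJ : k < J)
    {θ : ℝ≥0} {μ : Fin J → ℝ≥0} {ε : ℝ} (hε : 0 < ε) (hμ₁ : ∀ j : Fin J, (j : ℕ) < k → μ j = θ)
    (hμ₂ : ∀ j : Fin J, k ≤ (j : ℕ) → θ + 3 * ε ≤ μ j) :
    ∀ᶠ N : ℕ in atTop, (Measure.pi fun j ↦ Po(N * μ j)).real {nv | ExceedsThreshold k nv}ᶜ ≤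
      (∑ j, (μ j : ℝ)) / ε ^ 2 / N := by
  set M := ∑ j, (μ j : ℝ)
  filter_upwards [tendsto_natCast_atTop_atTop.eventually_gt_atTop ((M + ε) / ε ^ 2)] with N hN
  have hN₀ : (0 : ℝ) < N := lt_of_le_of_lt (by positivity) hN
  calc _ ≤ (Measure.pi fun j ↦ Po(N * μ j)).real
        {nv | ∃ j, ε * N ≤ |(nv j : ℝ) - (N * μ j : ℝ≥0)|} := by
        refine measureReal_mono fun nv hnv ↦ ?_
        simp only [Set.mem_compl_iff, Set.mem_ofPred_eq] at hnv ⊢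
        by_contra! hclose
        exact hnv <| exceedsThreshold_of_abs_sub_lt (θ := θ) (M := M) hk hkJ hε
          (fun j hj ↦ by simp [hμ₁ j hj]) hμ₂
          (fun j ↦ single_le_sum (fun i _ ↦ (μ i).coe_nonneg) (mem_univ j))
          ((div_lt_iff₀' (by positivity)).1 hN) fun j ↦ by simpa using hclose j
    _ ≤ (∑ j, ((N * μ j : ℝ≥0) : ℝ)) / (ε * N) ^ 2 :=
        measureReal_pi_poissonMeasure_exists_le_abs_sub _ (by positivity)
    _ = M / ε ^ 2 / N := by
        simp only [NNReal.coe_mul, NNReal.coe_natCast, ← mul_sum, M]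
        field_simp

theorem order_statistic_exceeds_threshold_general (J k : ℕ) (hk : 1 ≤ k) (hkJ : k < J)
    (θ : NNReal) (μ : Fin J → NNReal)
    (hμ1 : ∀ j : Fin J, (j : ℕ) < k → μ j = θ)
    (hμ2 : ∀ j : Fin J, k ≤ (j : ℕ) → θ < μ j) :
    Tendsto (fun N : ℕ =>
        ∑' nv : Fin J → ℕ,
          if ((((sortedCounts nv).take k).sum : ℝ) / k
                + Real.sqrt ((Finset.univ.sup nv : ℕ) : ℝ) < ((sortedCounts nv).getD k 0 : ℝ))
          then ∏ j, poissonPMFReal (N * μ j) (nv j) else 0)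
      atTop (nhds 1) := by
  obtain ⟨δ, hδ, hgap⟩ := exists_pos_forall_add_le (b := fun j ↦ (μ j : ℝ)) fun j hj ↦
    NNReal.coe_lt_coe.2 (hμ2 j hj)
  have hbad := eventually_measureReal_not_exceedsThreshold_le hk hkJ (by positivity : 0 < δ / 3)
    hμ1 fun j hj ↦ by linarith [hgap j hj]
  exact (tendsto_measureReal_of_compl_le .of_discrete hbad).congr fun N ↦
    measureReal_pi_poissonMeasure _ _

theorem order_statistic_exceeds_threshold (J k : ℕ) (hk : 1 ≤ k) (hkJ : k < J)
    (θ : NNReal) (hθ : 0 < θ) (μ : Fin J → NNReal)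
    (hμ1 : ∀ j : Fin J, (j : ℕ) < k → μ j = θ)
    (hμ2 : ∀ j : Fin J, k ≤ (j : ℕ) → θ < μ j) :
    Tendsto (fun N : ℕ =>
        ∑' nv : Fin J → ℕ,
          if ((((sortedCounts nv).take k).sum : ℝ) / k
                + Real.sqrt ((Finset.univ.sup nv : ℕ) : ℝ) < ((sortedCounts nv).getD k 0 : ℝ))
          then ∏ j, poissonPMFReal (N * μ j) (nv j) else 0)
      atTop (nhds 1) :=
  order_statistic_exceeds_threshold_general J k hk hkJ θ μ hμ1 hμ2
end

section
/- For c > 0 and n ≥ 0: if n ≤ λ then b = 0 maximizes g(b) = n·b − c·e^b − λ|b| over b ≥ 0; if n > λ and (n − λ)/c > 1 then b = ln((n−λ)/c) > 0 is the unique maximizer of g over b ≥ 0. -/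
/-! On `b ≥ 0` the penalty `λ|b|` is linear, so the objective is `m b - c eᵇ` with `m = n - λ`.
If `m ≤ 0` this is decreasing. If `m > 0`, put `B = log (m / c)`, so that `c eᴮ = m`; then
`c eᵇ = m e^(b - B) ≥ m (1 + b - B)`, strictly unless `b = B`, which is `m b - c eᵇ ≤ m B - c eᴮ`. -/

open Real

lemma linear_sub_exp_le_at_zero {m c b : ℝ} (hm : m ≤ 0) (hc : 0 ≤ c) (hb : 0 ≤ b) :
    m * b - c * exp b ≤ m * 0 - c * exp 0 := by
  have hmb : m * b ≤ 0 := mul_nonpos_of_nonpos_of_nonneg hm hb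
  have hexp : c * exp 0 ≤ c * exp b := mul_le_mul_of_nonneg_left (exp_le_exp.2 hb) hc
  linarith

lemma linear_sub_exp_lt_at_log {m c b : ℝ} (hm : 0 < m) (hc : 0 < c) (hb : b ≠ log (m / c)) :
    m * b - c * exp b < m * log (m / c) - c * exp (log (m / c)) := by
  set B := log (m / c)
  have hexpB : exp B = m / c := exp_log (div_pos hm hc)
  have hcB : c * exp B = m := by rw [hexpB]; field_simp
  have hshift : c * exp b = m * exp (b - B) := by rw [exp_sub, hexpB]; field_simp
  have htangent : m * (b - B + 1) < m * exp (b - B) :=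
    mul_lt_mul_of_pos_left (add_one_lt_exp (sub_ne_zero.2 hb)) hm
  linarith

lemma linear_sub_exp_le_at_log {m c : ℝ} (hm : 0 < m) (hc : 0 < c) (b : ℝ) :
    m * b - c * exp b ≤ m * log (m / c) - c * exp (log (m / c)) := by
  rcases eq_or_ne b (log (m / c)) with rfl | hb
  · exact le_rfl
  · exact (linear_sub_exp_lt_at_log hm hc hb).le

lemma sub_mul_abs_eq_of_nonneg (n c lam : ℝ) {b : ℝ} (hb : 0 ≤ b) :
    n * b - c * exp b - lam * |b| = (n - lam) * b - c * exp b := by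
  rw [abs_of_nonneg hb]; ring

theorem constrained_soft_threshold_general (c n lam : ℝ) (hc : 0 < c) :
    (n ≤ lam → ∀ b : ℝ, 0 ≤ b →
      n * b - c * Real.exp b - lam * |b| ≤ n * 0 - c * Real.exp 0 - lam * |(0 : ℝ)|) ∧
    (lam < n → 1 < (n - lam) / c →
      0 < Real.log ((n - lam) / c) ∧
      (∀ b : ℝ, 0 ≤ b →
        n * b - c * Real.exp b - lam * |b|
          ≤ n * Real.log ((n - lam) / c) - c * Real.exp (Real.log ((n - lam) / c))
            - lam * |Real.log ((n - lam) / c)|) ∧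
      (∀ b : ℝ, 0 ≤ b → b ≠ Real.log ((n - lam) / c) →
        n * b - c * Real.exp b - lam * |b|
          < n * Real.log ((n - lam) / c) - c * Real.exp (Real.log ((n - lam) / c))
            - lam * |Real.log ((n - lam) / c)|)) := by
  refine ⟨fun hle b hb => ?_, fun hlt hratio => ?_⟩
  · rw [sub_mul_abs_eq_of_nonneg n c lam hb, sub_mul_abs_eq_of_nonneg n c lam le_rfl]
    exact linear_sub_exp_le_at_zero (sub_nonpos.2 hle) hc.le hb
  · have hm : 0 < n - lam := sub_pos.2 hlt
    have hB : 0 < log ((n - lam) / c) := log_pos hratio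
    refine ⟨hB, fun b hb => ?_, fun b hb hne => ?_⟩
    · rw [sub_mul_abs_eq_of_nonneg n c lam hb, sub_mul_abs_eq_of_nonneg n c lam hB.le]
      exact linear_sub_exp_le_at_log hm hc b
    · rw [sub_mul_abs_eq_of_nonneg n c lam hb, sub_mul_abs_eq_of_nonneg n c lam hB.le]
      exact linear_sub_exp_lt_at_log hm hc hne

theorem constrained_soft_threshold (c n lam : ℝ) (hc : 0 < c) (hn : 0 ≤ n) (hlam : 0 < lam) :
    (n ≤ lam → ∀ b : ℝ, 0 ≤ b →
      n * b - c * Real.exp b - lam * |b| ≤ n * 0 - c * Real.exp 0 - lam * |(0 : ℝ)|) ∧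
    (lam < n → 1 < (n - lam) / c →
      0 < Real.log ((n - lam) / c) ∧
      (∀ b : ℝ, 0 ≤ b →
        n * b - c * Real.exp b - lam * |b|
          ≤ n * Real.log ((n - lam) / c) - c * Real.exp (Real.log ((n - lam) / c))
            - lam * |Real.log ((n - lam) / c)|) ∧
      (∀ b : ℝ, 0 ≤ b → b ≠ Real.log ((n - lam) / c) →
        n * b - c * Real.exp b - lam * |b|
          < n * Real.log ((n - lam) / c) - c * Real.exp (Real.log ((n - lam) / c))
            - lam * |Real.log ((n - lam) / c)|)) :=
  constrained_soft_threshold_general c n lam hc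
end
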